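/- arXiv:2007.07348 — 2 statements merged into one kernel-verified Lean document; each statement's English description precedes it below -/
import Mathlib

section
/- For any finite connected graph G with n vertices, maximum degree Δ and minimum degree δ, the Kirchhoff index and Kemeny constant satisfy (n/Δ)·K ≤ R(G) ≤ (n/δ)·K. -/
open Finset Matrix Polynomial

/-- The transition matrix of the simple random walk on a graph:
`P i j = 1/deg(i)` if `i ~ j`, and `0` otherwise. -/
noncomputable def transMatrix {V : Type*} [Fintype V] (G : SimpleGraph V)
    [DecidableRel G.Adj] : Matrix V V ℝ :=
  fun i j => if G.Adj i j then (1 : ℝ) / (G.degree i) else 0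

/-- The stationary distribution of the simple random walk: `π i = deg(i) / (2|E|)`. -/
noncomputable def stationary {V : Type*} [Fintype V] [DecidableEq V] (G : SimpleGraph V)
    [DecidableRel G.Adj] : V → ℝ :=
  fun i => (G.degree i : ℝ) / (2 * G.edgeFinset.card)

/-- `H` is the table of expected hitting times of the simple random walk on `G`:
`H a b = E_a T_b`.  It is characterized by `H b b = 0` and the one-step
(first-step analysis) equations `H a b = 1 + ∑_j P a j * H j b` for `a ≠ b`. -/
def IsHittingTime {V : Type*} [Fintype V] (G : SimpleGraph V) [DecidableRel G.Adj]
    (H : V → V → ℝ) : Prop :=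
  (∀ b, H b b = 0) ∧ ∀ a b, a ≠ b → H a b = 1 + ∑ j, transMatrix G a j * H j b

/-- `R` is the table of effective resistances of `G` (unit resistor on each edge):
`R a b = v a - v b` where `v` is a potential for a unit current flow from `a` to `b`,
i.e. `L v = 1_a - 1_b` for the graph Laplacian `L`. -/
def IsEffectiveResistance {V : Type*} [Fintype V] [DecidableEq V] (G : SimpleGraph V)
    [DecidableRel G.Adj] (R : V → V → ℝ) : Prop :=
  ∀ a b, ∃ v : V → ℝ,
    G.lapMatrix ℝ *ᵥ v =
      (fun x => (if x = a then (1 : ℝ) else 0) - (if x = b then (1 : ℝ) else 0)) ∧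
    R a b = v a - v b

/-!
Summing the commute time identity `H a b + H b a = 2|E| R a b` over all pairs gives
`R(G) = (∑ a b, H a b) / (2|E|)`. On the other hand `n K = ∑ a b, π_b H a b` with
`δ / (2|E|) ≤ π_b ≤ Δ / (2|E|)`, and hitting times are nonnegative by the minimum principle.
-/

theorem SimpleGraph.sum_lapMatrix_mulVec {V R : Type*} [Fintype V] [DecidableEq V] [CommRing R]
    (G : SimpleGraph V) [DecidableRel G.Adj] (x : V → R) :
    ∑ i, (G.lapMatrix R *ᵥ x) i = 0 := by
  have h := dotProduct_mulVec (fun _ => (1 : R)) (G.lapMatrix R) x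
  rw [← mulVec_transpose, (G.isSymm_lapMatrix R).eq, G.lapMatrix_mulVec_const_eq_zero,
    zero_dotProduct] at h
  simpa [dotProduct] using h

section

variable {V : Type*} [Fintype V] (G : SimpleGraph V) [DecidableRel G.Adj]

theorem degree_mul_transMatrix (a j : V) :
    (G.degree a : ℝ) * transMatrix G a j = if G.Adj a j then 1 else 0 := by
  unfold transMatrix
  split_ifs with h
  · have : (G.degree a : ℝ) ≠ 0 := by exact_mod_cast h.degree_pos_left.ne'
    field_simp
  · rw [mul_zero]

theorem degree_mul_sum_transMatrix_mul (a : V) (f : V → ℝ) :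
    (G.degree a : ℝ) * ∑ j, transMatrix G a j * f j = ∑ j ∈ G.neighborFinset a, f j := by
  simp only [Finset.mul_sum, ← mul_assoc, degree_mul_transMatrix, ite_mul, one_mul, zero_mul,
    ← Finset.sum_filter]
  congr 1
  ext j
  simp

theorem sum_transMatrix_eq_one {a : V} (ha : 0 < G.degree a) : ∑ j, transMatrix G a j = 1 := by
  have h := degree_mul_sum_transMatrix_mul G a 1
  simp only [Pi.one_apply, mul_one, Finset.sum_const, G.card_neighborFinset_eq_degree,
    nsmul_eq_mul] at h
  exact (mul_eq_left₀ (by exact_mod_cast ha.ne')).mp h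

variable {G}

theorem IsHittingTime.nonneg (hconn : G.Connected) {H : V → V → ℝ} (hH : IsHittingTime G H)
    (a b : V) : 0 ≤ H a b := by
  obtain ⟨m, -, hm⟩ := Finset.exists_min_image Finset.univ (H · b) ⟨a, Finset.mem_univ a⟩
  by_contra! hneg
  have hmb : m ≠ b := by
    rintro rfl
    linarith [hH.1 m, hm a (Finset.mem_univ a)]
  have : Nontrivial V := ⟨⟨m, b, hmb⟩⟩
  have hrow := sum_transMatrix_eq_one G (hconn.preconnected.degree_pos_of_nontrivial m)
  have hstep : ∑ j, transMatrix G m j * H m b ≤ ∑ j, transMatrix G m j * H j b :=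
    Finset.sum_le_sum fun j hj =>
      mul_le_mul_of_nonneg_left (hm j hj) (by unfold transMatrix; positivity)
  rw [← Finset.sum_mul, hrow, one_mul] at hstep
  linarith [hH.2 m b hmb]

variable [DecidableEq V]

theorem IsHittingTime.lapMatrix_mulVec {H : V → V → ℝ} (hH : IsHittingTime G H) (b : V) :
    G.lapMatrix ℝ *ᵥ (H · b) =
      fun x => (G.degree x : ℝ) - if x = b then 2 * (#G.edgeFinset : ℝ) else 0 := by
  have off : ∀ x, x ≠ b → (G.lapMatrix ℝ *ᵥ (H · b)) x = G.degree x := fun x hx => by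
    rw [G.lapMatrix_mulVec_apply, hH.2 x b hx, mul_add, mul_one,
      degree_mul_sum_transMatrix_mul, add_sub_cancel_right]
  have hsum : ∑ x, ((G.lapMatrix ℝ *ᵥ (H · b)) x - G.degree x) = -(2 * #G.edgeFinset) := by
    rw [Finset.sum_sub_distrib, G.sum_lapMatrix_mulVec, zero_sub, neg_inj]
    exact_mod_cast G.sum_degrees_eq_twice_card_edges
  rw [Finset.sum_eq_single b (fun x _ hx => by rw [off x hx, sub_self])
    (by simp)] at hsum
  funext x
  by_cases hx : x = b
  · subst hx
    rw [if_pos rfl]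
    linarith
  · rw [off x hx, if_neg hx, sub_zero]

/-- The commute time identity: `2|E| v - (H · b - H · a)` is harmonic, hence constant. -/
theorem IsHittingTime.add_swap_eq_mul_resistance (hconn : G.Connected) {H R : V → V → ℝ}
    (hH : IsHittingTime G H) (hR : IsEffectiveResistance G R) (a b : V) :
    H a b + H b a = 2 * #G.edgeFinset * R a b := by
  obtain ⟨v, hv, hRab⟩ := hR a b
  set u : V → ℝ := fun x => 2 * #G.edgeFinset * v x - (H x b - H x a)
  have hu : G.lapMatrix ℝ *ᵥ u = 0 := by
    have hu' : u = (2 * #G.edgeFinset : ℝ) • v - ((H · b) - (H · a)) := rfl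
    rw [hu', mulVec_sub, mulVec_sub, mulVec_smul, hv, hH.lapMatrix_mulVec, hH.lapMatrix_mulVec]
    funext x
    simp only [Pi.sub_apply, Pi.smul_apply, Pi.zero_apply, smul_eq_mul]
    split_ifs <;> ring
  have huab := G.lapMatrix_mulVec_eq_zero_iff_forall_reachable.mp hu a b (hconn a b)
  simp only [u, hH.1] at huab
  rw [hRab]
  linarith

theorem sum_resistance_div_two_eq [Nontrivial V] (hconn : G.Connected) {H R : V → V → ℝ}
    (hH : IsHittingTime G H) (hR : IsEffectiveResistance G R) :
    (∑ i, ∑ j, R i j) / 2 = (∑ i, ∑ j, H i j) / (2 * #G.edgeFinset) := by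
  have hE : (0 : ℝ) < 2 * #G.edgeFinset := by
    have := Finset.sum_pos (fun v _ => hconn.preconnected.degree_pos_of_nontrivial (G := G) v)
      Finset.univ_nonempty
    rw [G.sum_degrees_eq_twice_card_edges] at this
    exact_mod_cast this
  have h : ∑ i, ∑ j, 2 * #G.edgeFinset * R i j = 2 * ∑ i, ∑ j, H i j := by
    simp only [← hH.add_swap_eq_mul_resistance hconn hR, Finset.sum_add_distrib]
    rw [Finset.sum_comm (f := fun i j => H j i)]
    ring
  simp only [← Finset.mul_sum] at h
  rw [div_eq_div_iff two_ne_zero hE.ne']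
  linarith

variable (G)

theorem sum_stationary_mul_le {f : V → ℝ} (hf : ∀ j, 0 ≤ f j) :
    ∑ j, stationary G j * f j ≤ G.maxDegree / (2 * #G.edgeFinset) * ∑ j, f j := by
  rw [Finset.mul_sum]
  unfold stationary
  gcongr with j
  · exact hf j
  · exact_mod_cast G.degree_le_maxDegree j

theorem le_sum_stationary_mul {f : V → ℝ} (hf : ∀ j, 0 ≤ f j) :
    G.minDegree / (2 * #G.edgeFinset) * ∑ j, f j ≤ ∑ j, stationary G j * f j := by
  rw [Finset.mul_sum]
  unfold stationary
  gcongr with j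
  · exact hf j
  · exact_mod_cast G.minDegree_le_degree j

end

/-- For any finite connected graph with `n` vertices, maximum degree `Δ` and minimum
degree `δ`, the Kirchhoff index `R(G) = ∑_{i<j} R_{ij}` and Kemeny constant `K`
satisfy `(n/Δ)·K ≤ R(G) ≤ (n/δ)·K`. -/
theorem kirchhoff_kemeny_bounds {V : Type*} [Fintype V] [DecidableEq V]
    (G : SimpleGraph V) [DecidableRel G.Adj] (hconn : G.Connected)
    (H : V → V → ℝ) (hH : IsHittingTime G H)
    (R : V → V → ℝ) (hR : IsEffectiveResistance G R)
    (K : ℝ) (hK : ∀ i, ∑ j, stationary G j * H i j = K) :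
    (Fintype.card V : ℝ) / G.maxDegree * K ≤ (∑ i, ∑ j, R i j) / 2 ∧
      (∑ i, ∑ j, R i j) / 2 ≤ (Fintype.card V : ℝ) / G.minDegree * K := by
  rcases subsingleton_or_nontrivial V with _ | _
  · obtain ⟨i⟩ := hconn.nonempty
    have hR0 : ∀ a b, R a b = 0 := fun a b => by
      obtain ⟨v, -, hv⟩ := hR a b
      rw [hv, Subsingleton.elim a b, sub_self]
    have hK0 : K = 0 := by rw [← hK i, Fintype.sum_subsingleton _ i, hH.1, mul_zero]
    simp [hR0, hK0]
  have hkemeny : (Fintype.card V : ℝ) * K = ∑ i, ∑ j, stationary G j * H i j := by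
    simp [hK]
  have hδ : (0 : ℝ) < G.minDegree := by
    exact_mod_cast hconn.preconnected.minDegree_pos_of_nontrivial
  have hΔ : (0 : ℝ) < G.maxDegree := hδ.trans_le (by exact_mod_cast G.minDegree_le_maxDegree)
  have hupper : (Fintype.card V : ℝ) * K ≤
      G.maxDegree / (2 * #G.edgeFinset) * ∑ i, ∑ j, H i j := by
    rw [hkemeny, Finset.mul_sum]
    exact Finset.sum_le_sum fun i _ => sum_stationary_mul_le G (hH.nonneg hconn i)
  have hlower : G.minDegree / (2 * #G.edgeFinset) * ∑ i, ∑ j, H i j ≤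
      (Fintype.card V : ℝ) * K := by
    rw [hkemeny, Finset.mul_sum]
    exact Finset.sum_le_sum fun i _ => le_sum_stationary_mul G (hH.nonneg hconn i)
  rw [sum_resistance_div_two_eq hconn hH hR, div_mul_eq_mul_div, div_mul_eq_mul_div]
  exact ⟨(div_le_iff₀ hΔ).mpr (hupper.trans_eq (by ring)),
    (le_div_iff₀ hδ).mpr ((le_of_eq (by ring)).trans hlower)⟩
end

section
/- A highly symmetric graph cannot have a resistance-regular cut-vertex. -/
open Finset Matrix Polynomial

/-! Under high symmetry the commute-time identity `H a b + H b a = 2 |E| R a b` becomes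
`H a b = |E| R a b`, so resistance regularity at `i` makes `H i j = c` for every neighbour `j`
of `i`. If `i` cut `G` into sides `A` and `B`, a walk from a neighbour `j ∈ A` to a target
`b ∈ B` would have to pass through `i`, so `H j b = H j i + H i b = 2c`. First-step analysis
at `i` then gives `deg i + 2c · #(N(i) ∩ A) ≤ deg i · c`, and likewise with `A` and `B`
exchanged; adding the two, the neighbour counts sum to `deg i` and what is left is
`deg i ≤ 0`. -/

namespace SimpleGraph

section Laplacian

variable {V : Type*} [Fintype V] [DecidableEq V] {G : SimpleGraph V} [DecidableRel G.Adj]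

theorem sum_lapMatrix_mulVec_s16 {R : Type*} [CommRing R] (v : V → R) :
    ∑ x, (G.lapMatrix R *ᵥ v) x = 0 := by
  rw [← one_dotProduct, dotProduct_mulVec, ← mulVec_transpose, (G.isSymm_lapMatrix (R := R)).eq]
  simp [Pi.one_def, lapMatrix_mulVec_const_eq_zero]

theorem apply_eq_of_adj_of_lapMatrix_mulVec_nonpos {w : V → ℝ} {x : V}
    (hx : (G.lapMatrix ℝ *ᵥ w) x ≤ 0) (hmax : ∀ y, G.Adj x y → w y ≤ w x) {y : V}
    (hxy : G.Adj x y) : w y = w x := by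
  have hsum : ∑ u ∈ G.neighborFinset x, (w x - w u) = (G.lapMatrix ℝ *ᵥ w) x := by
    rw [lapMatrix_mulVec_apply, sum_sub_distrib, sum_const, card_neighborFinset_eq_degree,
      nsmul_eq_mul]
  have hnonneg : ∀ u ∈ G.neighborFinset x, 0 ≤ w x - w u := fun u hu =>
    sub_nonneg.mpr (hmax u ((mem_neighborFinset G x u).mp hu))
  have := (sum_eq_zero_iff_of_nonneg hnonneg).mp
    (le_antisymm (hsum ▸ hx) (sum_nonneg hnonneg)) y ((mem_neighborFinset G x y).mpr hxy)
  linarith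

/-- Maximum principle for subharmonic functions on a region `S` whose only exit is `i`. -/
theorem apply_le_of_lapMatrix_mulVec_nonpos (hG : G.Preconnected) {S : Set V} {i : V}
    (hS : ∀ x ∈ S, G.neighborSet x ⊆ insert i S) {w : V → ℝ}
    (hw : ∀ x ∈ S, (G.lapMatrix ℝ *ᵥ w) x ≤ 0) {x : V} (hx : x ∈ S) : w x ≤ w i := by
  by_contra! hlt
  obtain ⟨m, hmS, hmax⟩ :=
    Set.exists_max_image (insert i S) w (Set.toFinite _) ⟨x, Set.mem_insert_of_mem i hx⟩
  have hlt_m : w i < w m := hlt.trans_le (hmax x (Set.mem_insert_of_mem i hx))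
  have hmS : m ∈ S := hmS.resolve_left (by rintro rfl; exact lt_irrefl _ hlt_m)
  obtain ⟨p⟩ := hG m i
  obtain ⟨d, -, ⟨hd₁S, hd₁m⟩, hd₂⟩ :=
    p.exists_boundary_dart {u | u ∈ S ∧ w u = w m} ⟨hmS, rfl⟩ (fun h => hlt_m.ne h.2)
  have hd₂S : d.snd ∈ insert i S := hS _ hd₁S d.adj
  have hd₂m : w d.snd = w d.fst :=
    apply_eq_of_adj_of_lapMatrix_mulVec_nonpos (hw _ hd₁S)
      (fun y hy => hd₁m ▸ hmax y (hS _ hd₁S hy)) d.adj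
  rcases hd₂S with hd₂i | hd₂S
  · rw [← hd₂i, hd₂m, hd₁m] at hlt_m
    exact lt_irrefl _ hlt_m
  · exact hd₂ ⟨hd₂S, hd₂m.trans hd₁m⟩

theorem apply_eq_of_lapMatrix_mulVec_eq_zero (hG : G.Preconnected) {S : Set V} {i : V}
    (hS : ∀ x ∈ S, G.neighborSet x ⊆ insert i S) {w : V → ℝ}
    (hw : ∀ x ∈ S, (G.lapMatrix ℝ *ᵥ w) x = 0) {x : V} (hx : x ∈ S) : w x = w i := by
  refine le_antisymm (apply_le_of_lapMatrix_mulVec_nonpos hG hS (fun y hy => (hw y hy).le) hx) ?_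
  have := apply_le_of_lapMatrix_mulVec_nonpos hG hS (w := -w)
    (fun y hy => by rw [mulVec_neg, Pi.neg_apply, hw y hy, neg_zero]) hx
  simpa using this

theorem card_filter_mem_add_card_filter_mem_compl_insert (i : V) (S : Set V)
    [DecidablePred (· ∈ S)] :
    #{j ∈ G.neighborFinset i | j ∈ S} + #{j ∈ G.neighborFinset i | j ∈ (insert i S)ᶜ} =
      G.degree i := by
  rw [← card_neighborFinset_eq_degree,
    ← card_filter_add_card_filter_not (s := G.neighborFinset i) (p := (· ∈ S))]
  congr 2
  refine filter_congr fun j hj => ?_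
  simp [(G.ne_of_adj ((mem_neighborFinset G i j).mp hj)).symm]

end Laplacian

section Cut

variable {V : Type*} {G : SimpleGraph V}

theorem exists_adj_mem_of_neighborSet_subset (hG : G.Preconnected) {S : Set V} {i : V}
    (hiS : i ∉ S) (hS : ∀ x ∈ S, G.neighborSet x ⊆ insert i S) (hne : S.Nonempty) :
    ∃ j ∈ S, G.Adj i j := by
  obtain ⟨x, hx⟩ := hne
  obtain ⟨p⟩ := hG x i
  obtain ⟨d, -, hd₁, hd₂⟩ := p.exists_boundary_dart S hx hiS
  obtain rfl : d.snd = i := (hS _ hd₁ d.adj).resolve_right hd₂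
  exact ⟨d.fst, hd₁, d.adj.symm⟩

theorem neighborSet_subset_insert_compl {S : Set V} {i : V}
    (hS : ∀ x ∈ S, G.neighborSet x ⊆ insert i S) :
    ∀ x ∈ (insert i S)ᶜ, G.neighborSet x ⊆ insert i (insert i S)ᶜ := by
  intro x hx y hxy
  by_cases hyS : y ∈ S
  · exact absurd (hS y hyS (G.adj_symm hxy)) hx
  · by_cases hyi : y = i
    · exact Or.inl hyi
    · exact Or.inr fun hy => hy.elim hyi hyS

theorem exists_of_not_preconnected_induce_compl_singleton {i : V}
    (h : ¬ (G.induce ({i}ᶜ : Set V)).Preconnected) :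
    ∃ S : Set V, i ∉ S ∧ (∀ x ∈ S, G.neighborSet x ⊆ insert i S) ∧ S.Nonempty ∧
      (insert i S)ᶜ.Nonempty := by
  simp only [Preconnected, not_forall] at h
  obtain ⟨x, y, hxy⟩ := h
  refine ⟨Subtype.val '' {z | (G.induce ({i}ᶜ : Set V)).Reachable x z}, ?_, ?_,
    ⟨x, x, Reachable.refl _, rfl⟩, ⟨y, ?_⟩⟩
  · rintro ⟨z, -, hz⟩
    exact z.2 hz
  · rintro _ ⟨z, hz, rfl⟩ u hzu
    by_cases hu : u = i
    · exact Or.inl hu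
    · exact Or.inr ⟨⟨u, hu⟩, hz.trans (Adj.reachable (by exact hzu)), rfl⟩
  · rintro (hy | ⟨z, hz, hzy⟩)
    · exact y.2 hy
    · exact hxy (Subtype.ext hzy ▸ hz)

end Cut

end SimpleGraph

theorem degree_mul_sum_transMatrix {V : Type*} [Fintype V] (G : SimpleGraph V)
    [DecidableRel G.Adj] (x : V) (f : V → ℝ) :
    (G.degree x : ℝ) * ∑ j, transMatrix G x j * f j = ∑ j ∈ G.neighborFinset x, f j := by
  rw [G.neighborFinset_eq_filter, sum_filter, mul_sum]
  refine sum_congr rfl fun j _ => ?_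
  by_cases hxj : G.Adj x j
  · have hdeg : (G.degree x : ℝ) ≠ 0 := Nat.cast_ne_zero.mpr hxj.degree_pos_left.ne'
    simp [transMatrix, hxj, hdeg]
  · simp [transMatrix, hxj]

namespace IsHittingTime

open SimpleGraph

variable {V : Type*} [Fintype V] {G : SimpleGraph V} [DecidableRel G.Adj] {H : V → V → ℝ}

theorem degree_mul_eq (hH : IsHittingTime G H) {a b : V} (hab : a ≠ b) :
    (G.degree a : ℝ) * H a b = G.degree a + ∑ j ∈ G.neighborFinset a, H j b := by
  rw [hH.2 a b hab, mul_add, mul_one, degree_mul_sum_transMatrix]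

theorem lapMatrix_mulVec_s16 [DecidableEq V] (hH : IsHittingTime G H) (b : V) :
    G.lapMatrix ℝ *ᵥ (fun x => H x b) =
      fun a => (G.degree a : ℝ) - if a = b then 2 * (#G.edgeFinset : ℝ) else 0 := by
  have hne : ∀ a ≠ b, (G.lapMatrix ℝ *ᵥ fun x => H x b) a = G.degree a := fun a hab => by
    rw [lapMatrix_mulVec_apply, hH.degree_mul_eq hab]
    ring
  funext a
  rcases eq_or_ne a b with rfl | hab
  · -- the entries of a Laplacian image sum to zero, which pins down the entry at `a`
    have hsum := G.sum_lapMatrix_mulVec_s16 fun x => H x a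
    rw [← add_sum_erase _ _ (mem_univ a), sum_congr rfl fun x hx => hne x (ne_of_mem_erase hx),
      sum_erase_eq_sub (mem_univ a)] at hsum
    have hdeg : ∑ x, (G.degree x : ℝ) = 2 * (#G.edgeFinset : ℝ) := by
      exact_mod_cast G.sum_degrees_eq_twice_card_edges
    rw [if_pos rfl]
    linarith
  · rw [hne a hab, if_neg hab, sub_zero]

theorem nonneg_s16 (hH : IsHittingTime G H) (hG : G.Preconnected) (x t : V) : 0 ≤ H x t := by
  classical
  rcases eq_or_ne x t with rfl | hxt
  · exact (hH.1 x).ge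
  have := apply_le_of_lapMatrix_mulVec_nonpos hG (S := {t}ᶜ) (w := -fun x => H x t)
    (fun _ _ y _ => em (y = t))
    (fun y hy => by
      rw [mulVec_neg]
      simp [hH.lapMatrix_mulVec_s16, Set.mem_compl_singleton_iff.mp hy])
    (Set.mem_compl_singleton_iff.mpr hxt)
  simpa [hH.1] using this

/-- `x ↦ H x t - H x i - H i t` is harmonic on `S` and vanishes at `i`. -/
theorem eq_add_of_neighborSet_subset (hH : IsHittingTime G H) (hG : G.Preconnected)
    {S : Set V} {i t : V} (hiS : i ∉ S) (htS : t ∉ S)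
    (hS : ∀ x ∈ S, G.neighborSet x ⊆ insert i S) {x : V} (hx : x ∈ S) :
    H x t = H x i + H i t := by
  classical
  have hharm : ∀ y ∈ S, (G.lapMatrix ℝ *ᵥ fun z => H z t - H z i - H i t) y = 0 := by
    intro y hy
    have hsplit : (fun z => H z t - H z i - H i t) =
        (fun z => H z t) - (fun z => H z i) - H i t • fun _ => 1 := by
      funext z
      simp
    rw [hsplit, mulVec_sub, mulVec_sub, mulVec_smul, lapMatrix_mulVec_const_eq_zero,
      hH.lapMatrix_mulVec_s16, hH.lapMatrix_mulVec_s16]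
    simp [ne_of_mem_of_not_mem hy htS, ne_of_mem_of_not_mem hy hiS]
  have := apply_eq_of_lapMatrix_mulVec_eq_zero hG hS hharm hx
  rw [hH.1] at this
  linarith

/-- The commute-time identity. -/
theorem add_swap_eq [DecidableEq V] (hH : IsHittingTime G H) (hG : G.Preconnected) {a b : V}
    {v : V → ℝ} (hv : G.lapMatrix ℝ *ᵥ v =
      fun x => (if x = a then (1 : ℝ) else 0) - (if x = b then (1 : ℝ) else 0)) :
    H a b + H b a = 2 * (#G.edgeFinset : ℝ) * (v a - v b) := by
  have hker : G.lapMatrix ℝ *ᵥ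
      ((fun x => H x b) - (fun x => H x a) - (2 * (#G.edgeFinset : ℝ)) • v) = 0 := by
    rw [mulVec_sub, mulVec_sub, mulVec_smul, hH.lapMatrix_mulVec_s16, hH.lapMatrix_mulVec_s16, hv]
    funext x
    simp only [Pi.sub_apply, Pi.smul_apply, smul_eq_mul, Pi.zero_apply]
    split_ifs <;> ring
  have := (lapMatrix_mulVec_eq_zero_iff_forall_reachable (G := G)).mp hker a b (hG a b)
  simp only [Pi.sub_apply, Pi.smul_apply, smul_eq_mul, hH.1] at this
  linarith

theorem eq_card_edgeFinset_mul_resistance [DecidableEq V] (hH : IsHittingTime G H)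
    (hG : G.Preconnected) (hHS : ∀ a b, H a b = H b a) {R : V → V → ℝ}
    (hR : IsEffectiveResistance G R) (a b : V) : H a b = (#G.edgeFinset : ℝ) * R a b := by
  obtain ⟨v, hv, hRab⟩ := hR a b
  have := hH.add_swap_eq hG hv
  rw [← hHS a b] at this
  rw [hRab]
  linarith

/-- First-step analysis at `i`: a neighbour `j ∈ S` must pass through `i` to reach `t`, so
`H j t = H j i + H i t = 2 c`. -/
theorem degree_add_card_mul_le (hH : IsHittingTime G H) (hG : G.Preconnected)
    (hHS : ∀ a b, H a b = H b a) {S : Set V} [DecidablePred (· ∈ S)] {i t : V} {c : ℝ}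
    (hiS : i ∉ S) (hS : ∀ x ∈ S, G.neighborSet x ⊆ insert i S) (htS : t ∉ S)
    (hit : G.Adj i t) (hc : ∀ j, G.Adj i j → H i j = c) :
    (G.degree i : ℝ) + #{j ∈ G.neighborFinset i | j ∈ S} * (2 * c) ≤ G.degree i * c := by
  have hfirst := hH.degree_mul_eq hit.ne
  rw [hc t hit, ← sum_filter_add_sum_filter_not _ (· ∈ S)] at hfirst
  have hnear : ∑ j ∈ G.neighborFinset i with j ∈ S, H j t =
      #{j ∈ G.neighborFinset i | j ∈ S} * (2 * c) := by
    rw [← nsmul_eq_mul, ← sum_const]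
    refine sum_congr rfl fun j hj => ?_
    obtain ⟨hij, hjS⟩ := mem_filter.mp hj
    rw [hH.eq_add_of_neighborSet_subset hG hiS htS hS hjS, hHS j i,
      hc j ((mem_neighborFinset G i j).mp hij), hc t hit]
    ring
  have hfar : 0 ≤ ∑ j ∈ G.neighborFinset i with j ∉ S, H j t :=
    sum_nonneg fun j _ => hH.nonneg_s16 hG j t
  linarith

end IsHittingTime

/-- A highly symmetric graph cannot have a resistance-regular cut-vertex: if `G`
is highly symmetric and `i` is resistance regular, then deleting `i` does not
disconnect `G`. -/
theorem HS_no_resistance_regular_cut_vertex {V : Type*} [Fintype V] [DecidableEq V]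
    (G : SimpleGraph V) [DecidableRel G.Adj] (hconn : G.Connected)
    (H : V → V → ℝ) (hH : IsHittingTime G H) (hHS : ∀ a b, H a b = H b a)
    (R : V → V → ℝ) (hR : IsEffectiveResistance G R)
    (i : V) (hrr : ∀ j k, G.Adj i j → G.Adj i k → R i j = R i k) :
    (G.induce ({i}ᶜ : Set V)).Preconnected := by
  classical
  by_contra hcut
  have hG := hconn.preconnected
  obtain ⟨A, hiA, hA, hAne, hBne⟩ :=
    SimpleGraph.exists_of_not_preconnected_induce_compl_singleton hcut
  have hiB : i ∉ (insert i A)ᶜ := fun h => h (Set.mem_insert i A)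
  have hB := SimpleGraph.neighborSet_subset_insert_compl hA
  obtain ⟨a, haA, hia⟩ := SimpleGraph.exists_adj_mem_of_neighborSet_subset hG hiA hA hAne
  obtain ⟨b, hbB, hib⟩ := SimpleGraph.exists_adj_mem_of_neighborSet_subset hG hiB hB hBne
  have hc : ∀ j, G.Adj i j → H i j = H i a := fun j hij => by
    rw [hH.eq_card_edgeFinset_mul_resistance hG hHS hR,
      hH.eq_card_edgeFinset_mul_resistance hG hHS hR, hrr j a hij hia]
  have hleA := hH.degree_add_card_mul_le hG hHS hiA hA
    (fun h => hbB (Set.mem_insert_of_mem i h)) hib hc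
  have hleB := hH.degree_add_card_mul_le hG hHS hiB hB
    (fun h => h (Set.mem_insert_of_mem i haA)) hia hc
  have hcard : (#{j ∈ G.neighborFinset i | j ∈ A} : ℝ) +
      #{j ∈ G.neighborFinset i | j ∈ (insert i A)ᶜ} = G.degree i := by
    exact_mod_cast G.card_filter_mem_add_card_filter_mem_compl_insert i A
  have hdeg : (G.degree i : ℝ) ≤ 0 := by
    linear_combination (hleA + hleB - 2 * H i a * hcard) / 2
  exact hdeg.not_gt (Nat.cast_pos.mpr hia.degree_pos_left)
end
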